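/- arXiv:1212.5523 — 2 statements merged into one kernel-verified Lean document; each statement's English description precedes it below -/
import Mathlib

section
/- Let μ > 0, η̃ > 0, and let G : ℝᵐ → ℝ be continuous with |G(y)| ≤ μη̃ for all y. If y : [t⁰,∞) → ℝᵐ is continuous and η : [t⁰,∞) → ℝ is differentiable with η'(t) = -μ(η(t) - η̃) + G(y(t)) for all t > t⁰, and η(t⁰) ∈ [0, 2η̃], then η(t) ∈ [0, 2η̃] for all t ≥ t⁰. -/
open Set

/-- Integrating factor: `exp (μ s) * (u s - K)` has derivative `exp (μ s) * (u' s - μ (K - u s)) ≤ 0`. -/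
theorem le_of_hasDerivAt_le_mul_sub {u u' : ℝ → ℝ} {a μ K : ℝ}
    (hu : ∀ s ∈ Ici a, HasDerivAt u (u' s) s) (hu' : ∀ s > a, u' s ≤ μ * (K - u s))
    (ha : u a ≤ K) : ∀ t ≥ a, u t ≤ K := by
  intro t ht
  let F : ℝ → ℝ := fun s => Real.exp (μ * s) * (u s - K)
  have hF : ∀ s ∈ Ici a,
      HasDerivAt F (Real.exp (μ * s) * (μ * (u s - K) + u' s)) s := by
    intro s hs
    have hexp : HasDerivAt (fun s => Real.exp (μ * s)) (Real.exp (μ * s) * μ) s := by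
      simpa using ((hasDerivAt_id s).const_mul μ).exp
    exact (hexp.mul ((hu s hs).sub_const K)).congr_deriv (by ring)
  have hanti : AntitoneOn F (Ici a) := by
    refine antitoneOn_of_hasDerivWithinAt_nonpos (convex_Ici a)
      (fun s hs => (hF s hs).continuousAt.continuousWithinAt)
      (fun s hs => (hF s (interior_subset hs)).hasDerivWithinAt) fun s hs => ?_
    rw [interior_Ici] at hs
    have hus := hu' s hs
    exact mul_nonpos_of_nonneg_of_nonpos (Real.exp_pos _).le (by linarith)
  have hFt : F t ≤ 0 :=
    (hanti self_mem_Ici ht ht).trans (mul_nonpos_of_nonneg_of_nonpos (Real.exp_pos _).le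
      (sub_nonpos.2 ha))
  exact sub_nonpos.1 (nonpos_of_mul_nonpos_right hFt (Real.exp_pos _))

theorem delay_interval_invariance_general {m : ℕ} (μ ηt t0 : ℝ)
    (G : (Fin m → ℝ) → ℝ) (hGb : ∀ y, |G y| ≤ μ * ηt)
    (y : ℝ → (Fin m → ℝ))
    (η : ℝ → ℝ) (η' : ℝ → ℝ)
    (hηdiff : ∀ t ∈ Set.Ici t0, HasDerivAt η (η' t) t)
    (hode : ∀ t > t0, η' t = -μ * (η t - ηt) + G (y t))
    (h0 : η t0 ∈ Set.Icc 0 (2 * ηt)) :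
    ∀ t ≥ t0, η t ∈ Set.Icc 0 (2 * ηt) := by
  intro t ht
  have hupper := le_of_hasDerivAt_le_mul_sub (μ := μ) (K := 2 * ηt) hηdiff
    (fun s hs => by rw [hode s hs]; linarith [le_of_abs_le (hGb (y s))]) h0.2 t ht
  have hlower := le_of_hasDerivAt_le_mul_sub (u := fun s => -η s) (μ := μ) (K := 0)
    (fun s hs => (hηdiff s hs).neg)
    (fun s hs => by rw [hode s hs]; linarith [neg_le_of_abs_le (hGb (y s))]) (by simpa using h0.1)
    t ht
  exact ⟨neg_nonpos.1 hlower, hupper⟩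

/-- Invariance of the interval [0, 2η̃] for the delay ODE
    η'(t) = -μ(η(t) - η̃) + G(y(t)) under the bound |G| ≤ μη̃. -/
theorem delay_interval_invariance {m : ℕ} (μ ηt t0 : ℝ) (hμ : 0 < μ) (hηt : 0 < ηt)
    (G : (Fin m → ℝ) → ℝ) (hGcont : Continuous G) (hGb : ∀ y, |G y| ≤ μ * ηt)
    (y : ℝ → (Fin m → ℝ)) (hy : ContinuousOn y (Set.Ici t0))
    (η : ℝ → ℝ) (η' : ℝ → ℝ)
    (hηdiff : ∀ t ∈ Set.Ici t0, HasDerivAt η (η' t) t)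
    (hode : ∀ t > t0, η' t = -μ * (η t - ηt) + G (y t))
    (h0 : η t0 ∈ Set.Icc 0 (2 * ηt)) :
    ∀ t ≥ t0, η t ∈ Set.Icc 0 (2 * ηt) :=
  delay_interval_invariance_general μ ηt t0 G hGb y η η' hηdiff hode h0
end

section
/- Let μ > 0, η̃ > 0, h₁ ∈ (0, η̃], and let G : ℝᵐ → ℝ satisfy |G(y)| ≤ μ(η̃ - h₁) for all y. If η : [t⁰,∞) → ℝ is differentiable with η'(t) = -μ(η(t) - η̃) + G(y(t)) for t > t⁰ and η(t⁰) ≥ h₁, then η(t) ≥ h₁ for all t ≥ t⁰. -/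
/-!
With the integrating factor `exp (μ t)`, the differential inequality `g' + μ g ≥ 0` for
`g = η - h₁` says that `exp (μ t) g t` is nondecreasing, so `g` keeps the sign of `g t⁰`.
The bound on `G` is exactly what makes `η' + μ (η - h₁) = μ (η̃ - h₁) + G (y t)` nonnegative.
-/

open Real Set

section IntegratingFactor

variable {g g' : ℝ → ℝ} {μ t₀ : ℝ}

theorem hasDerivAt_exp_mul_mul {t : ℝ} (hg : HasDerivAt g (g' t) t) :
    HasDerivAt (fun s => exp (μ * s) * g s) (exp (μ * t) * (μ * g t + g' t)) t := by
  have hexp : HasDerivAt (fun s => exp (μ * s)) (exp (μ * t) * μ) t := by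
    simpa using ((hasDerivAt_id t).const_mul μ).exp
  exact (hexp.mul hg).congr_deriv (by ring)

theorem monotoneOn_exp_mul_mul (hg : ∀ t ∈ Ici t₀, HasDerivAt g (g' t) t)
    (hg' : ∀ t > t₀, 0 ≤ μ * g t + g' t) :
    MonotoneOn (fun s => exp (μ * s) * g s) (Ici t₀) := by
  have hderiv : ∀ t ∈ Ici t₀, HasDerivAt (fun s => exp (μ * s) * g s)
      (exp (μ * t) * (μ * g t + g' t)) t := fun t ht => hasDerivAt_exp_mul_mul (hg t ht)
  refine monotoneOn_of_hasDerivWithinAt_nonneg (convex_Ici t₀)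
    (fun t ht => (hderiv t ht).continuousAt.continuousWithinAt)
    (fun t ht => (hderiv t (interior_subset ht)).hasDerivWithinAt) fun t ht => ?_
  rw [interior_Ici] at ht
  exact mul_nonneg (exp_pos _).le (hg' t ht)

theorem nonneg_of_deriv_add_mul_nonneg (hg : ∀ t ∈ Ici t₀, HasDerivAt g (g' t) t)
    (hg' : ∀ t > t₀, 0 ≤ μ * g t + g' t) (h₀ : 0 ≤ g t₀) : ∀ t ≥ t₀, 0 ≤ g t := by
  intro t ht
  have hmono := monotoneOn_exp_mul_mul hg hg' self_mem_Ici (mem_Ici.mpr ht) ht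
  have hstart : 0 ≤ exp (μ * t₀) * g t₀ := mul_nonneg (exp_pos _).le h₀
  exact (mul_nonneg_iff_of_pos_left (exp_pos (μ * t))).mp (hstart.trans hmono)

end IntegratingFactor

theorem delay_lower_bound_invariance_general {m : ℕ} (μ ηt h1 t0 : ℝ)
    (G : (Fin m → ℝ) → ℝ) (hGb : ∀ y, |G y| ≤ μ * (ηt - h1))
    (y : ℝ → (Fin m → ℝ))
    (η : ℝ → ℝ) (η' : ℝ → ℝ)
    (hηdiff : ∀ t ∈ Set.Ici t0, HasDerivAt η (η' t) t)
    (hode : ∀ t > t0, η' t = -μ * (η t - ηt) + G (y t))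
    (h0 : h1 ≤ η t0) :
    ∀ t ≥ t0, h1 ≤ η t := by
  refine fun t ht => sub_nonneg.mp (nonneg_of_deriv_add_mul_nonneg (g' := η') (μ := μ)
    (fun s hs => (hηdiff s hs).sub_const h1) (fun s hs => ?_) (sub_nonneg.mpr h0) t ht)
  rw [hode s hs]
  linear_combination neg_abs_le (G (y s)) + hGb (y s)

/-- If |G(y)| ≤ μ(η̃ - h₁) and η(t⁰) ≥ h₁ with h₁ ∈ (0, η̃], then the
    state-dependent delay η stays bounded below by h₁. -/
theorem delay_lower_bound_invariance {m : ℕ} (μ ηt h1 t0 : ℝ) (hμ : 0 < μ)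
    (hηt : 0 < ηt) (hh1 : h1 ∈ Set.Ioc 0 ηt)
    (G : (Fin m → ℝ) → ℝ) (hGb : ∀ y, |G y| ≤ μ * (ηt - h1))
    (y : ℝ → (Fin m → ℝ)) (hy : ContinuousOn y (Set.Ici t0))
    (η : ℝ → ℝ) (η' : ℝ → ℝ)
    (hηdiff : ∀ t ∈ Set.Ici t0, HasDerivAt η (η' t) t)
    (hode : ∀ t > t0, η' t = -μ * (η t - ηt) + G (y t))
    (h0 : h1 ≤ η t0) :
    ∀ t ≥ t0, h1 ≤ η t :=
  delay_lower_bound_invariance_general μ ηt h1 t0 G hGb y η η' hηdiff hode h0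
end
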